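/- Under the same hypotheses (f proper lsc convex, g differentiable with L-Lipschitz gradient, F = f + g bounded below, 0 < τ < 1/L), the proximal gradient iterates x_{k+1} = Prox_{τf}(x_k − τ∇g(x_k)) satisfy the sufficient decrease property F(x_{k+1}) ≤ F(x_k) − (1/(2τ) − L/2)‖x_{k+1} − x_k‖². -/

import Mathlib

open RealInnerProductSpace intervalIntegral

variable {E : Type*} [NormedAddCommGroup E] [InnerProductSpace ℝ E] [CompleteSpace E]

lemma descent_lemma (g : E → ℝ) (g' : E → E) (L : ℝ) (hL : 0 ≤ L)
    (hg : ∀ x, HasGradientAt g (g' x) x)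
    (hgL : ∀ x y, ‖g' x - g' y‖ ≤ L * ‖x - y‖) (x y : E) :
    g y ≤ g x + ⟪g' x, y - x⟫ + L / 2 * ‖y - x‖ ^ 2 := by
  set c : ℝ → E := fun t => x + t • (y - x) with hc
  have hcd : ∀ t : ℝ, HasDerivAt c (y - x) t := fun t => by
    simpa [hc] using ((hasDerivAt_id t).smul_const (y - x)).const_add x
  have hφ : ∀ t : ℝ, HasDerivAt (fun s => g (c s)) ⟪g' (c t), y - x⟫ t := by
    intro t
    have := ((hg (c t)).hasFDerivAt.comp_hasDerivAt t (hcd t))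
    exact this
  have hcontg' : Continuous g' := by
    have : LipschitzWith L.toNNReal g' :=
      LipschitzWith.of_dist_le_mul (fun a b => by
        simpa [dist_eq_norm, Real.coe_toNNReal L hL] using hgL a b)
    exact this.continuous
  have hcont : Continuous fun t : ℝ => ⟪g' (c t), y - x⟫ := by
    exact (hcontg'.comp (by continuity)).inner continuous_const
  have key : g (c 1) - g (c 0) = ∫ t in (0:ℝ)..1, ⟪g' (c t), y - x⟫ :=
    (intervalIntegral.integral_eq_sub_of_hasDerivAt (fun t _ => hφ t)
      (hcont.intervalIntegrable 0 1)).symm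
  have hc0 : c 0 = x := by simp [hc]
  have hc1 : c 1 = y := by simp [hc]
  have hbound : ∫ t in (0:ℝ)..1, ⟪g' (c t), y - x⟫ ≤
      ∫ t in (0:ℝ)..1, (⟪g' x, y - x⟫ + L * ‖y - x‖ ^ 2 * t) := by
    apply intervalIntegral.integral_mono_on (by norm_num) (hcont.intervalIntegrable 0 1)
      ((Continuous.intervalIntegrable (by continuity) 0 1))
    intro t ht
    have h1 : ⟪g' (c t) - g' x, y - x⟫ ≤ L * ‖y - x‖ ^ 2 * t := by
      calc ⟪g' (c t) - g' x, y - x⟫ ≤ ‖g' (c t) - g' x‖ * ‖y - x‖ :=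
            real_inner_le_norm _ _
        _ ≤ (L * ‖c t - x‖) * ‖y - x‖ := by
            exact mul_le_mul_of_nonneg_right (hgL _ _) (norm_nonneg _)
        _ = L * ‖y - x‖ ^ 2 * t := by
            have : ‖c t - x‖ = t * ‖y - x‖ := by
              simp [hc, norm_smul, abs_of_nonneg ht.1]
            rw [this]; ring
    have := h1
    rw [inner_sub_left] at this
    linarith
  have hval : ∫ t in (0:ℝ)..1, (⟪g' x, y - x⟫ + L * ‖y - x‖ ^ 2 * t) =
      ⟪g' x, y - x⟫ + L / 2 * ‖y - x‖ ^ 2 := by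
    rw [intervalIntegral.integral_add (Continuous.intervalIntegrable (by continuity) 0 1)
      (Continuous.intervalIntegrable (by continuity) 0 1),
      intervalIntegral.integral_const_mul, integral_id]
    simp
    ring
  rw [hc0, hc1] at key
  linarith [key ▸ (hval ▸ hbound)]

/-- Sufficient decrease property of the proximal gradient iterates:
`F(x_{k+1}) ≤ F(x_k) − (1/(2τ) − L/2)‖x_{k+1} − x_k‖²`. -/
theorem stmt_4 {n : ℕ}
    (f g : EuclideanSpace ℝ (Fin n) → ℝ)
    (g' : EuclideanSpace ℝ (Fin n) → EuclideanSpace ℝ (Fin n)) (L τ : ℝ)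
    (hf_lsc : LowerSemicontinuous f) (hf_conv : ConvexOn ℝ Set.univ f)
    (hg : ∀ x, HasGradientAt g (g' x) x)
    (hgL : ∀ x y, ‖g' x - g' y‖ ≤ L * ‖x - y‖)
    (hbdd : ∃ m : ℝ, ∀ x, m ≤ f x + g x)
    (hL : 0 < L) (hτ : 0 < τ) (hτL : τ < 1 / L)
    (P : EuclideanSpace ℝ (Fin n) → EuclideanSpace ℝ (Fin n))
    (hP : ∀ x z, (1 / 2) * ‖x - P x‖ ^ 2 + τ * f (P x) ≤ (1 / 2) * ‖x - z‖ ^ 2 + τ * f z)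
    (x : ℕ → EuclideanSpace ℝ (Fin n))
    (hx : ∀ k, x (k + 1) = P (x k - τ • g' (x k))) :
    ∀ k, f (x (k + 1)) + g (x (k + 1)) ≤
      f (x k) + g (x k) - (1 / (2 * τ) - L / 2) * ‖x (k + 1) - x k‖ ^ 2 := by
  intro k
  set a := x k with ha
  set b := x (k + 1) with hbdef
  set v := g' a with hv
  have hb : b = P (a - τ • v) := hx k
  have prox := hP (a - τ • v) a
  rw [← hb] at prox
  have e1 : a - τ • v - b = (a - b) - τ • v := by abel
  have e2 : a - τ • v - a = -(τ • v) := by abel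
  rw [e1, e2] at prox
  have h1 : ‖(a - b) - τ • v‖ ^ 2
      = ‖a - b‖ ^ 2 - 2 * (τ * ⟪a - b, v⟫) + τ ^ 2 * ‖v‖ ^ 2 := by
    rw [norm_sub_sq_real, real_inner_smul_right, norm_smul]
    rw [Real.norm_eq_abs, abs_of_pos hτ]
    ring
  have h2 : ‖-(τ • v)‖ ^ 2 = τ ^ 2 * ‖v‖ ^ 2 := by
    rw [norm_neg, norm_smul, Real.norm_eq_abs, abs_of_pos hτ]; ring
  rw [h1, h2] at prox
  have hf : f b ≤ f a + ⟪a - b, v⟫ - 1 / (2 * τ) * ‖a - b‖ ^ 2 := by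
    have step : (f b - f a - ⟪a - b, v⟫) * τ ≤ -(1 / 2) * ‖a - b‖ ^ 2 := by nlinarith
    have := (le_div_iff₀ hτ).2 step
    have heq : -(1 / 2) * ‖a - b‖ ^ 2 / τ = -(1 / (2 * τ)) * ‖a - b‖ ^ 2 := by
      field_simp
    rw [heq] at this
    linarith
  have D := descent_lemma g g' L hL.le hg hgL a b
  have h3 : ⟪v, b - a⟫ = -⟪a - b, v⟫ := by
    rw [real_inner_comm, ← neg_sub a b, inner_neg_left]
  have h4 : ‖b - a‖ = ‖a - b‖ := norm_sub_rev _ _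
  rw [h3, h4] at D
  have hgoal : ‖b - a‖ ^ 2 = ‖a - b‖ ^ 2 := by rw [h4]
  rw [hgoal]
  linarith
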